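/- Let A : ℝ^d → ℝ be measurable with |A(x)| ≤ C(1+|x|)^{-d} and (in the sense of the mean value inequality) |A(x−y) − A(−y)| ≤ C' |x| / (1+ min(|x−y|,|y|))^{d+1} for |x| < |y|/2. Then for h ∈ L¹(ℝ^d, (1+|x|)^{-(d+1)} dx) and γ > d+1, the function V₂(x) = ∫ (A(x−y) − A(−y)) h(y) dy belongs to L¹(ℝ^d, (1+|x|)^{-γ} dx). -/

import Mathlib

/-!
Split at `‖x‖ = ‖y‖ / 2`. For `‖x‖ < ‖y‖ / 2` the mean value bound gives
`|A (x - y) - A (-y)| ≲ ‖x‖ (1 + ‖y‖)^{-(d+1)}`; otherwise `1 + ‖y‖ ≤ 2 (1 + ‖x‖)`, and the size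
bound on `A` is enough once one compares `1 + ‖x‖` with `1 + ‖x - y‖`. Either way the kernel times
`(1 + ‖x‖)^{-γ}` is dominated by `(1 + ‖y‖)^{-(d+1)} ((1 + ‖x‖)^{1-γ} + (1 + ‖x - y‖)^{1-γ})`.
Multiplied by `|h y|` this is integrable on the product (a tensor product plus a convolution of
integrable functions, as `γ - 1 > d`), so Fubini gives the claim.
-/

open MeasureTheory Real Filter

lemma rpow_neg_le_two_rpow_mul_rpow_neg {a b t : ℝ} (hb : 0 < b) (hba : b ≤ 2 * a)
    (ht : 0 ≤ t) : a ^ (-t) ≤ 2 ^ t * b ^ (-t) :=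
  calc a ^ (-t) ≤ (b / 2) ^ (-t) :=
        rpow_le_rpow_of_nonpos (by positivity) (by linarith) (by linarith)
    _ = 2 ^ t * b ^ (-t) := by
        rw [div_rpow hb.le zero_le_two, rpow_neg zero_le_two, div_inv_eq_mul, mul_comm]

lemma rpow_neg_mul_rpow_neg_le {a b s γ : ℝ} (hb : 0 < b) (hba : b ≤ 2 * a) :
    b ^ (-s) * a ^ (-γ) ≤ 2 * (b ^ (-(s + 1)) * a ^ (1 - γ)) := by
  have ha : 0 < a := by linarith
  have hinv : a ^ (-1 : ℝ) ≤ 2 * b ^ (-1 : ℝ) := by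
    simpa using rpow_neg_le_two_rpow_mul_rpow_neg hb hba zero_le_one
  calc b ^ (-s) * a ^ (-γ) = b ^ (-s) * a ^ (-1 : ℝ) * a ^ (1 - γ) := by
        rw [mul_assoc, ← rpow_add ha]; ring_nf
    _ ≤ b ^ (-s) * (2 * b ^ (-1 : ℝ)) * a ^ (1 - γ) := by gcongr
    _ = 2 * (b ^ (-(s + 1)) * a ^ (1 - γ)) := by
        rw [neg_add, rpow_add hb]; ring

lemma rpow_neg_mul_rpow_neg_le_of_le_add {a b c s γ : ℝ} (hb : 0 < b) (hc : 0 < c)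
    (hba : b ≤ 2 * a) (hbac : b ≤ a + c) (hs : 0 ≤ s) (hγ : s + 1 ≤ γ) :
    c ^ (-s) * a ^ (-γ) ≤ 2 ^ (s + 1) * (b ^ (-(s + 1)) * (a ^ (1 - γ) + c ^ (1 - γ))) := by
  have ha : 0 < a := by linarith
  rcases le_total a c with hac | hca
  · calc c ^ (-s) * a ^ (-γ) ≤ 2 ^ s * b ^ (-s) * a ^ (-γ) := by
          gcongr; exact rpow_neg_le_two_rpow_mul_rpow_neg hb (by linarith) hs
      _ ≤ 2 ^ s * (2 * (b ^ (-(s + 1)) * a ^ (1 - γ))) := by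
          rw [mul_assoc]
          exact mul_le_mul_of_nonneg_left (rpow_neg_mul_rpow_neg_le hb hba) (by positivity)
      _ ≤ 2 ^ (s + 1) * (b ^ (-(s + 1)) * (a ^ (1 - γ) + c ^ (1 - γ))) := by
          rw [rpow_add_one two_ne_zero, mul_assoc]; gcongr; linarith [rpow_pos_of_pos hc (1 - γ)]
  · calc c ^ (-s) * a ^ (-γ) = c ^ (-s) * a ^ (-(s + 1)) * a ^ (s + 1 - γ) := by
          rw [mul_assoc, ← rpow_add ha]; ring_nf
      _ ≤ c ^ (-s) * (2 ^ (s + 1) * b ^ (-(s + 1))) * c ^ (s + 1 - γ) := by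
          gcongr ?_ * ?_ * ?_
          · exact rpow_neg_le_two_rpow_mul_rpow_neg hb hba (by linarith)
          · exact rpow_le_rpow_of_nonpos hc hca (by linarith)
      _ = 2 ^ (s + 1) * (b ^ (-(s + 1)) * c ^ (1 - γ)) := by
          rw [show (1 - γ) = -s + (s + 1 - γ) by ring, rpow_add hc]; ring
      _ ≤ 2 ^ (s + 1) * (b ^ (-(s + 1)) * (a ^ (1 - γ) + c ^ (1 - γ))) := by
          gcongr; linarith [rpow_pos_of_pos ha (1 - γ)]

section KernelBound

variable {E : Type*} [NormedAddCommGroup E] {A : E → ℝ} {C C' s γ : ℝ}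

lemma abs_kernel_diff_mul_weight_le_of_lt_half
    (hMVI : ∀ x y : E, ‖x‖ < ‖y‖ / 2 →
      |A (x - y) - A (-y)| ≤ C' * ‖x‖ / (1 + min ‖x - y‖ ‖y‖) ^ (s + 1))
    (hs : 0 ≤ s) {x y : E} (hxy : ‖x‖ < ‖y‖ / 2) :
    |A (x - y) - A (-y)| * (1 + ‖x‖) ^ (-γ) ≤
      2 ^ (s + 1) * |C'| * ((1 + ‖y‖) ^ (-(s + 1)) * (1 + ‖x‖) ^ (1 - γ)) := by
  have hmin : 1 + ‖y‖ ≤ 2 * (1 + min ‖x - y‖ ‖y‖) := by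
    have := norm_sub_norm_le y x
    rw [norm_sub_rev y x] at this
    have := le_min (show ‖y‖ / 2 ≤ ‖x - y‖ by linarith)
      (show ‖y‖ / 2 ≤ ‖y‖ by linarith [norm_nonneg y])
    linarith
  have hy : 0 < 1 + ‖y‖ := by positivity
  have hx : 0 < 1 + ‖x‖ := by positivity
  calc |A (x - y) - A (-y)| * (1 + ‖x‖) ^ (-γ)
      ≤ |C'| * ‖x‖ * (1 + min ‖x - y‖ ‖y‖) ^ (-(s + 1)) * (1 + ‖x‖) ^ (-γ) := by
        gcongr
        refine (hMVI x y hxy).trans ?_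
        rw [rpow_neg (by positivity), ← div_eq_mul_inv]
        gcongr
        exact le_abs_self C'
    _ ≤ |C'| * (1 + ‖x‖) * (2 ^ (s + 1) * (1 + ‖y‖) ^ (-(s + 1))) * (1 + ‖x‖) ^ (-γ) := by
        gcongr
        · linarith
        · exact rpow_neg_le_two_rpow_mul_rpow_neg hy hmin (by linarith)
    _ = 2 ^ (s + 1) * |C'| * ((1 + ‖y‖) ^ (-(s + 1)) * (1 + ‖x‖) ^ (1 - γ)) := by
        rw [sub_eq_add_neg, rpow_add hx, rpow_one]; ring

lemma abs_kernel_diff_mul_weight_le_of_half_le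
    (hbound : ∀ x : E, |A x| ≤ C * (1 + ‖x‖) ^ (-s))
    (hs : 0 ≤ s) (hγ : s + 1 ≤ γ) {x y : E} (hxy : ‖y‖ / 2 ≤ ‖x‖) :
    |A (x - y) - A (-y)| * (1 + ‖x‖) ^ (-γ) ≤
      (2 ^ (s + 1) + 2) * |C| *
        ((1 + ‖y‖) ^ (-(s + 1)) * ((1 + ‖x‖) ^ (1 - γ) + (1 + ‖x - y‖) ^ (1 - γ))) := by
  have hy : 0 < 1 + ‖y‖ := by positivity
  have hyx : 1 + ‖y‖ ≤ 2 * (1 + ‖x‖) := by linarith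
  have htri : 1 + ‖y‖ ≤ (1 + ‖x‖) + (1 + ‖x - y‖) := by
    have := norm_sub_le x (x - y)
    rw [sub_sub_cancel] at this
    linarith
  have hA : ∀ z : E, |A z| ≤ |C| * (1 + ‖z‖) ^ (-s) := fun z =>
    (hbound z).trans (by gcongr; exact le_abs_self C)
  have hshift := rpow_neg_mul_rpow_neg_le_of_le_add hy (by positivity) hyx htri hs hγ
  have horigin := rpow_neg_mul_rpow_neg_le (s := s) (γ := γ) hy hyx
  calc |A (x - y) - A (-y)| * (1 + ‖x‖) ^ (-γ)
      ≤ (|C| * (1 + ‖x - y‖) ^ (-s) + |C| * (1 + ‖y‖) ^ (-s)) * (1 + ‖x‖) ^ (-γ) := by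
        gcongr
        refine (abs_sub _ _).trans (add_le_add (hA _) ?_)
        simpa using hA (-y)
    _ = |C| * ((1 + ‖x - y‖) ^ (-s) * (1 + ‖x‖) ^ (-γ) +
          (1 + ‖y‖) ^ (-s) * (1 + ‖x‖) ^ (-γ)) := by ring
    _ ≤ |C| * (2 ^ (s + 1) *
          ((1 + ‖y‖) ^ (-(s + 1)) * ((1 + ‖x‖) ^ (1 - γ) + (1 + ‖x - y‖) ^ (1 - γ))) +
          2 * ((1 + ‖y‖) ^ (-(s + 1)) * ((1 + ‖x‖) ^ (1 - γ) + (1 + ‖x - y‖) ^ (1 - γ)))) := by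
        refine mul_le_mul_of_nonneg_left (add_le_add hshift (horigin.trans ?_)) (abs_nonneg C)
        gcongr
        linarith [rpow_pos_of_pos (show 0 < 1 + ‖x - y‖ by positivity) (1 - γ)]
    _ = _ := by ring

lemma abs_kernel_diff_mul_weight_le
    (hbound : ∀ x : E, |A x| ≤ C * (1 + ‖x‖) ^ (-s))
    (hMVI : ∀ x y : E, ‖x‖ < ‖y‖ / 2 →
      |A (x - y) - A (-y)| ≤ C' * ‖x‖ / (1 + min ‖x - y‖ ‖y‖) ^ (s + 1))
    (hs : 0 ≤ s) (hγ : s + 1 ≤ γ) (x y : E) :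
    |A (x - y) - A (-y)| * (1 + ‖x‖) ^ (-γ) ≤
      (2 ^ (s + 1) + 2) * (|C| + |C'|) *
        ((1 + ‖y‖) ^ (-(s + 1)) * ((1 + ‖x‖) ^ (1 - γ) + (1 + ‖x - y‖) ^ (1 - γ))) := by
  rcases lt_or_ge ‖x‖ (‖y‖ / 2) with hxy | hxy
  · refine (abs_kernel_diff_mul_weight_le_of_lt_half hMVI hs hxy).trans ?_
    gcongr ?_ * (_ * ?_)
    · nlinarith [abs_nonneg C, abs_nonneg C', rpow_pos_of_pos two_pos (s + 1)]
    · linarith [show 0 ≤ (1 + ‖x - y‖) ^ (1 - γ) by positivity]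
  · refine (abs_kernel_diff_mul_weight_le_of_half_le hbound hs hγ hxy).trans ?_
    gcongr
    linarith [abs_nonneg C']

end KernelBound

section Integrability

variable {E : Type*} [NormedAddCommGroup E] [NormedSpace ℝ E] [FiniteDimensional ℝ E]
  [MeasurableSpace E] [BorelSpace E] {μ : Measure E} [μ.IsAddHaarMeasure]

lemma integrable_one_add_norm_rpow_one_sub {γ : ℝ} (hγ : (Module.finrank ℝ E : ℝ) + 1 < γ) :
    Integrable (fun x : E => (1 + ‖x‖) ^ (1 - γ)) μ := by
  simpa only [neg_sub] using integrable_one_add_norm (μ := μ) (r := γ - 1) (by linarith)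

theorem integrable_integral_kernel_diff_mul_weight {A h : E → ℝ} {C C' s γ : ℝ}
    (hA : Measurable A) (hbound : ∀ x : E, |A x| ≤ C * (1 + ‖x‖) ^ (-s))
    (hMVI : ∀ x y : E, ‖x‖ < ‖y‖ / 2 →
      |A (x - y) - A (-y)| ≤ C' * ‖x‖ / (1 + min ‖x - y‖ ‖y‖) ^ (s + 1))
    (hh : Measurable h) (hint : Integrable (fun y => |h y| * (1 + ‖y‖) ^ (-(s + 1))) μ)
    (hs : 0 ≤ s) (hγs : s + 1 ≤ γ) (hγ : (Module.finrank ℝ E : ℝ) + 1 < γ) :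
    Integrable (fun x => (∫ y, (A (x - y) - A (-y)) * h y ∂μ) * (1 + ‖x‖) ^ (-γ)) μ := by
  set K := (2 ^ (s + 1) + 2) * (|C| + |C'|)
  set g := fun y : E => |h y| * (1 + ‖y‖) ^ (-(s + 1))
  set P := fun x : E => (1 + ‖x‖) ^ (1 - γ)
  have hP : Integrable P μ := integrable_one_add_norm_rpow_one_sub hγ
  have hdom : Integrable (fun p : E × E => K * (P p.1 * g p.2 + g p.2 * P (p.1 - p.2)))
      (μ.prod μ) :=
    ((hP.mul_prod hint).add
      (hint.convolution_integrand (ContinuousLinearMap.mul ℝ ℝ) hP)).const_mul K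
  have hmeas : Measurable fun p : E × E =>
      (A (p.1 - p.2) - A (-p.2)) * h p.2 * (1 + ‖p.1‖) ^ (-γ) := by
    fun_prop
  have hF : Integrable (fun p : E × E =>
      (A (p.1 - p.2) - A (-p.2)) * h p.2 * (1 + ‖p.1‖) ^ (-γ)) (μ.prod μ) := by
    refine hdom.mono' hmeas.aestronglyMeasurable (Eventually.of_forall fun ⟨x, y⟩ => ?_)
    have := abs_kernel_diff_mul_weight_le hbound hMVI hs hγs x y
    simp only [norm_mul, Real.norm_eq_abs, abs_of_pos (show 0 < (1 + ‖x‖) ^ (-γ) by positivity)]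
    calc |A (x - y) - A (-y)| * |h y| * (1 + ‖x‖) ^ (-γ)
        = |h y| * (|A (x - y) - A (-y)| * (1 + ‖x‖) ^ (-γ)) := by ring
      _ ≤ |h y| * (K * ((1 + ‖y‖) ^ (-(s + 1)) * (P x + P (x - y)))) := by gcongr
      _ = K * (P x * g y + g y * P (x - y)) := by simp only [g]; ring
  simpa only [integral_mul_const] using hF.integral_prod_left

end Integrability

theorem stmt_5_general (d : ℕ)
    (A : EuclideanSpace ℝ (Fin d) → ℝ) (hAmeas : Measurable A)
    (C C' : ℝ)
    (hbound : ∀ x : EuclideanSpace ℝ (Fin d), |A x| ≤ C * (1 + ‖x‖) ^ (-(d : ℝ)))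
    (hMVI : ∀ x y : EuclideanSpace ℝ (Fin d), ‖x‖ < ‖y‖ / 2 →
      |A (x - y) - A (-y)| ≤ C' * ‖x‖ / (1 + min ‖x - y‖ ‖y‖) ^ ((d : ℝ) + 1))
    (h : EuclideanSpace ℝ (Fin d) → ℝ) (hmeas : Measurable h)
    (hint : Integrable (fun y : EuclideanSpace ℝ (Fin d) =>
      |h y| * (1 + ‖y‖) ^ (-((d : ℝ) + 1))))
    (γ : ℝ) (hγ : (d : ℝ) + 1 < γ) :
    Integrable (fun x : EuclideanSpace ℝ (Fin d) =>
      (∫ y : EuclideanSpace ℝ (Fin d), (A (x - y) - A (-y)) * h y) * (1 + ‖x‖) ^ (-γ)) :=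
  integrable_integral_kernel_diff_mul_weight hAmeas hbound hMVI hmeas hint (Nat.cast_nonneg d)
    hγ.le (by rwa [finrank_euclideanSpace_fin])

theorem stmt_5 (d : ℕ) (hd : d = 2 ∨ d = 3)
    (A : EuclideanSpace ℝ (Fin d) → ℝ) (hAmeas : Measurable A)
    (C C' : ℝ)
    (hbound : ∀ x : EuclideanSpace ℝ (Fin d), |A x| ≤ C * (1 + ‖x‖) ^ (-(d : ℝ)))
    (hMVI : ∀ x y : EuclideanSpace ℝ (Fin d), ‖x‖ < ‖y‖ / 2 →
      |A (x - y) - A (-y)| ≤ C' * ‖x‖ / (1 + min ‖x - y‖ ‖y‖) ^ ((d : ℝ) + 1))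
    (h : EuclideanSpace ℝ (Fin d) → ℝ) (hmeas : Measurable h)
    (hint : Integrable (fun y : EuclideanSpace ℝ (Fin d) =>
      |h y| * (1 + ‖y‖) ^ (-((d : ℝ) + 1))))
    (γ : ℝ) (hγ : (d : ℝ) + 1 < γ) :
    Integrable (fun x : EuclideanSpace ℝ (Fin d) =>
      (∫ y : EuclideanSpace ℝ (Fin d), (A (x - y) - A (-y)) * h y) * (1 + ‖x‖) ^ (-γ)) :=
  stmt_5_general d A hAmeas C C' hbound hMVI h hmeas hint γ hγ
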